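/- arXiv:2010.00376 — 2 statements merged into one kernel-verified Lean document; each statement's English description precedes it below -/
import Mathlib

section
/- Let s ∈ (0,1), a := 1 − 2s, u ∈ C^∞(ℝ^n) ∩ W^{2,∞}(ℝ^n), and let U be the unique bounded solution of the extension problem for u. Let η̄_R be as in the standard cutoff setup, let e ∈ ℝ^n be a unit vector, and for (x,y) ∈ ℝ^{n+1}_+ set Ψ₂(x,y) := η̄_R²(x)(∂²_e U(x,y))₊². Then there exists a constant C, depending only on n and ‖η̄‖_{C²(ℝ^n)}, such that L_a Ψ₂ ≤ C χ_{B_{R/2}}(x) R^{-2} y^a (∂²_e U)² everywhere in ℝ^{n+1}_+, where at points where Ψ₂ is only C^{1,1} the operator L_a is computed in nondivergence form with the Laplacian defined via the liminf of second incremental quotients. -/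
open MeasureTheory Filter Metric Set

noncomputable section

/-- Euclidean space `ℝⁿ`. -/
abbrev En (n : ℕ) := EuclideanSpace ℝ (Fin n)

/-- The (closed) upper half space `ℝ^{n+1}` is modelled by `En n × ℝ`,
with points `p = (x, y)`. -/
abbrev Hn (n : ℕ) := En n × ℝ

/-- Horizontal partial derivative `∂_{x_i} V`. -/
def pdX (n : ℕ) (V : Hn n → ℝ) (p : Hn n) (i : Fin n) : ℝ :=
  fderiv ℝ V p (EuclideanSpace.single i 1, 0)

/-- Vertical partial derivative `∂_y V`. -/
def pdY (n : ℕ) (V : Hn n → ℝ) (p : Hn n) : ℝ :=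
  fderiv ℝ V p ((0 : En n), (1:ℝ))

/-- The (Euclidean) squared length of the full gradient `|∇V|²` in `ℝ^{n+1}`. -/
def gradSq (n : ℕ) (V : Hn n → ℝ) (p : Hn n) : ℝ :=
  (∑ i, (pdX n V p i)^2) + (pdY n V p)^2

/-- The Laplacian `ΔV` in `ℝ^{n+1}` (for smooth `V`). -/
def lapH (n : ℕ) (V : Hn n → ℝ) (p : Hn n) : ℝ :=
  (∑ i, pdX n (fun q => pdX n V q i) p i) + pdY n (fun q => pdY n V q) p

/-- The extension operator `L_a V = −div(y^a ∇V) = −y^a ΔV − a y^{a−1} ∂_y V`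
(in nondivergence form, for functions that are smooth where it is evaluated). -/
def La (n : ℕ) (a : ℝ) (V : Hn n → ℝ) (p : Hn n) : ℝ :=
  -(p.2 ^ a * lapH n V p + a * p.2 ^ (a - 1) * pdY n V p)

/-- Directional derivative `∂_e V` of a function on the half space along a horizontal
unit direction `e ∈ ℝⁿ`. -/
def pdE (n : ℕ) (e : En n) (V : Hn n → ℝ) (p : Hn n) : ℝ := fderiv ℝ V p (e, 0)

/-- `‖η‖_{C²(ℝⁿ)} ≤ M`. -/
def C2BddBy (n : ℕ) (η : En n → ℝ) (M : ℝ) : Prop :=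
  ∀ x : En n, |η x| ≤ M ∧ ‖fderiv ℝ η x‖ ≤ M ∧ ‖fderiv ℝ (fderiv ℝ η) x‖ ≤ M

/-- `U` is a bounded solution of the extension problem for `u`:
`div(y^a ∇U) = 0` in `ℝ^{n+1}_+` and `U(·,0) = u`. -/
def IsBoundedExtension (n : ℕ) (a : ℝ) (u : En n → ℝ) (U : Hn n → ℝ) : Prop :=
  ContinuousOn U {p : Hn n | 0 ≤ p.2} ∧
  ContDiffOn ℝ (⊤ : ℕ∞) U {p : Hn n | 0 < p.2} ∧
  (∀ x : En n, U (x, 0) = u x) ∧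
  (∃ M : ℝ, ∀ p : Hn n, 0 ≤ p.2 → |U p| ≤ M) ∧
  (∀ p : Hn n, 0 < p.2 → La n a U p = 0)

/-- `(-Δ)V(p)` in `ℝ^{n+1}` computed through the liminf of second incremental
quotients (which equals `-ΔV(p)` whenever `V` is `C²` near `p`). -/
def negLapIncH (n : ℕ) (V : Hn n → ℝ) (p : Hn n) : ℝ :=
  Filter.liminf (fun h : ℝ =>
      (∑ i : Fin n,
        (2 * V p - V (p + h • ((EuclideanSpace.single i 1 : En n), (0:ℝ)))
          - V (p - h • ((EuclideanSpace.single i 1 : En n), (0:ℝ)))) / h^2)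
      + (2 * V p - V (p + h • ((0 : En n), (1:ℝ)))
          - V (p - h • ((0 : En n), (1:ℝ)))) / h^2)
    (nhdsWithin (0:ℝ) (Set.Ioi 0))

/-- The operator `L_a` in nondivergence form, with the Laplacian computed through the
liminf of second incremental quotients (suitable for functions that are only `C^{1,1}`):
`L_a V = y^a (−ΔV) − a y^{a−1} ∂_y V`. -/
def LaInc (n : ℕ) (a : ℝ) (V : Hn n → ℝ) (p : Hn n) : ℝ :=
  p.2 ^ a * negLapIncH n V p - a * p.2 ^ (a - 1) * pdY n V p

/-!
Differentiating the extension equation in horizontal directions shows that `g := ∂²_e U` solves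
`L_a g = 0` again. At a point where `Ψ₂ = ζ² (g₊)²` vanishes (`ζ := η̄_R`), the point is a
minimum of `Ψ₂ ≥ 0`: all second incremental quotients are `≤ 0` and `∂_y Ψ₂ = 0`, so
`L_a Ψ₂ ≤ 0`. Elsewhere `g > 0`, so `Ψ₂ = ζ² g²` is smooth near the point, and the Leibniz rule
for `L_a` together with `L_a g = 0` gives
`L_a (ζ² g²) = -y^a (2 ζ² |∇g|² + g² Δ(ζ²) + 8 ζ g ∇ζ·∇g) ≤ y^a g² (6 |∇ζ|² - 2 ζ Δζ)`
after completing the square. If `M` bounds `‖η̄‖_{C²}`, then `|∂_i ζ| ≤ M/R` and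
`|∂_i² ζ| ≤ M/R²`, so this is at most `8 n M² R⁻² y^a g²`.
-/

open Topology

theorem tendsto_secondDiffQuot_of_hasDerivAt {φ φ' : ℝ → ℝ} {L : ℝ}
    (hφ : ∀ᶠ t in 𝓝 0, HasDerivAt φ (φ' t) t) (hφ' : HasDerivAt φ' L 0) :
    Tendsto (fun h => (φ h + φ (-h) - 2 * φ 0) / h ^ 2) (𝓝[>] 0) (𝓝 L) := by
  have hneg : Tendsto (fun t : ℝ => -t) (𝓝 0) (𝓝 0) := continuous_neg.tendsto' 0 0 neg_zero
  have hφ'_odd : HasDerivAt (fun t => φ' t - φ' (-t)) (2 * L) 0 := by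
    have h := (neg_zero (G := ℝ) ▸ hφ').comp 0 (hasDerivAt_neg 0)
    exact (hφ'.sub h).congr_deriv (by ring)
  have hquot : Tendsto (fun h => (φ' h - φ' (-h)) / (2 * h)) (𝓝[>] 0) (𝓝 L) := by
    have := hφ'_odd.tendsto_slope_zero_right.div_const 2
    simp only [zero_add, neg_zero, sub_self, sub_zero, smul_eq_mul] at this
    convert this using 2 with h
    · field_simp
    · ring
  have hderiv : ∀ᶠ t in 𝓝 0,
      HasDerivAt (fun h => φ h + φ (-h) - 2 * φ 0) (φ' t - φ' (-t)) t := by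
    filter_upwards [hφ, hneg.eventually hφ] with t ht ht'
    exact ((ht.add (ht'.comp t (hasDerivAt_neg t))).sub_const (2 * φ 0)).congr_deriv (by ring)
  have hcont : ContinuousAt (fun h => φ h + φ (-h) - 2 * φ 0) 0 :=
    hderiv.self_of_nhds.continuousAt
  -- L'Hôpital's rule reduces the claim to the symmetric difference quotient of `φ'`
  refine HasDerivAt.lhopital_zero_nhdsGT (nhdsWithin_le_nhds hderiv)
    (Eventually.of_forall fun h => by simpa using hasDerivAt_pow 2 h) ?_ ?_ ?_ hquot
  · filter_upwards [self_mem_nhdsWithin] with h (hh : 0 < h)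
    positivity
  · simpa [two_mul] using hcont.tendsto.mono_left nhdsWithin_le_nhds
  · exact ((continuous_pow 2).tendsto' 0 0 (by norm_num)).mono_left nhdsWithin_le_nhds

/-- No boundedness is needed: a real `liminf` with no eventual lower bound is `sSup ∅ = 0`. -/
theorem Real.liminf_nonpos {α : Type*} {l : Filter α} [l.NeBot] {u : α → ℝ}
    (h : ∀ᶠ x in l, u x ≤ 0) : liminf u l ≤ 0 :=
  Real.sSup_le (fun _ hb => (hb.and h).exists.elim fun _ hx => hx.1.trans hx.2) le_rfl

section DirDeriv

variable {E : Type*} [NormedAddCommGroup E] [NormedSpace ℝ E]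

theorem fderiv_fderiv_comp_smul {X : Type*} [NormedAddCommGroup X] [NormedSpace ℝ X]
    (f : E → X) (c : ℝ) (x : E) :
    fderiv ℝ (fderiv ℝ fun y => f (c • y)) x = (c * c) • fderiv ℝ (fderiv ℝ f) (c • x) := by
  have h : fderiv ℝ (fun y => f (c • y)) = c • fun y => fderiv ℝ f (c • y) :=
    funext fun y => fderiv_comp_smul c
  rw [h, fderiv_const_smul_field (f := fun y => fderiv ℝ f (c • y)) c, Pi.smul_apply,
    fderiv_comp_smul, smul_smul]

def dirDeriv (v : E) (V : E → ℝ) : E → ℝ := fun q => fderiv ℝ V q v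

variable {Ω : Set E} {V W F G : E → ℝ} {q : E}

theorem ContDiffOn.differentiableAt_of_isOpen {X : Type*} [NormedAddCommGroup X]
    [NormedSpace ℝ X] {f : E → X} (hΩ : IsOpen Ω) (hf : ContDiffOn ℝ (⊤ : ℕ∞) f Ω)
    (hq : q ∈ Ω) : DifferentiableAt ℝ f q :=
  (hf.contDiffAt (hΩ.mem_nhds hq)).differentiableAt (by decide)

theorem ContDiffOn.dirDeriv (hΩ : IsOpen Ω) (hV : ContDiffOn ℝ (⊤ : ℕ∞) V Ω) (v : E) :
    ContDiffOn ℝ (⊤ : ℕ∞) (dirDeriv v V) Ω :=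
  (hV.fderiv_of_isOpen hΩ (m := (⊤ : ℕ∞)) le_rfl).clm_apply contDiffOn_const

theorem Filter.EventuallyEq.dirDeriv (h : V =ᶠ[𝓝 q] W) (v : E) :
    _root_.dirDeriv v V =ᶠ[𝓝 q] _root_.dirDeriv v W := by
  filter_upwards [h.fderiv (𝕜 := ℝ)] with r hr
  simp only [_root_.dirDeriv, hr]

theorem dirDeriv_neg (F : E → ℝ) (v : E) :
    dirDeriv v (fun r => -F r) q = -dirDeriv v F q := by
  simp [dirDeriv, fderiv_fun_neg]

theorem dirDeriv_add (hF : DifferentiableAt ℝ F q) (hG : DifferentiableAt ℝ G q) (v : E) :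
    dirDeriv v (fun r => F r + G r) q = dirDeriv v F q + dirDeriv v G q := by
  simp [dirDeriv, fderiv_fun_add hF hG]

theorem dirDeriv_sum {ι : Type*} {s : Finset ι} {A : ι → E → ℝ}
    (hA : ∀ i ∈ s, DifferentiableAt ℝ (A i) q) (v : E) :
    dirDeriv v (fun r => ∑ i ∈ s, A i r) q = ∑ i ∈ s, dirDeriv v (A i) q := by
  simp [dirDeriv, fderiv_fun_sum hA]

theorem dirDeriv_mul (hF : DifferentiableAt ℝ F q) (hG : DifferentiableAt ℝ G q) (v : E) :
    dirDeriv v (fun r => F r * G r) q = F q * dirDeriv v G q + G q * dirDeriv v F q := by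
  simp [dirDeriv, fderiv_fun_mul hF hG]

theorem dirDeriv_comm (hΩ : IsOpen Ω) (hV : ContDiffOn ℝ (⊤ : ℕ∞) V Ω) (hq : q ∈ Ω)
    (v w : E) : dirDeriv w (dirDeriv v V) q = dirDeriv v (dirDeriv w V) q := by
  have hV2 : ContDiffAt ℝ 2 V q := (hV.contDiffAt (hΩ.mem_nhds hq)).of_le (by decide)
  have hdV : DifferentiableAt ℝ (fderiv ℝ V) q :=
    (hV.fderiv_of_isOpen hΩ (m := (⊤ : ℕ∞)) (by decide)).differentiableAt_of_isOpen hΩ hq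
  change fderiv ℝ (fun r => fderiv ℝ V r v) q w = fderiv ℝ (fun r => fderiv ℝ V r w) q v
  simp only [fderiv_clm_apply hdV (differentiableAt_const _), fderiv_fun_const, Pi.zero_apply,
    ContinuousLinearMap.comp_zero, zero_add, ContinuousLinearMap.flip_apply]
  exact hV2.isSymmSndFDerivAt (by simp) w v

theorem dirDeriv_dirDeriv_dirDeriv_comm (hΩ : IsOpen Ω) (hV : ContDiffOn ℝ (⊤ : ℕ∞) V Ω)
    (hq : q ∈ Ω) (v w : E) :
    dirDeriv w (dirDeriv v (dirDeriv v V)) q = dirDeriv v (dirDeriv v (dirDeriv w V)) q := by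
  have hcomm : dirDeriv v (dirDeriv w V) =ᶠ[𝓝 q] dirDeriv w (dirDeriv v V) := by
    filter_upwards [hΩ.mem_nhds hq] with r hr
    exact dirDeriv_comm hΩ hV hr w v
  rw [dirDeriv_comm hΩ (hV.dirDeriv hΩ v) hq, (hcomm.dirDeriv v).eq_of_nhds]

theorem dirDeriv_dirDeriv_mul (hΩ : IsOpen Ω) (hF : ContDiffOn ℝ (⊤ : ℕ∞) F Ω)
    (hG : ContDiffOn ℝ (⊤ : ℕ∞) G Ω) (hq : q ∈ Ω) (v w : E) :
    dirDeriv w (dirDeriv v (fun r => F r * G r)) q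
      = F q * dirDeriv w (dirDeriv v G) q + G q * dirDeriv w (dirDeriv v F) q
        + (dirDeriv w F q * dirDeriv v G q + dirDeriv w G q * dirDeriv v F q) := by
  have hdiff {H : E → ℝ} (hH : ContDiffOn ℝ (⊤ : ℕ∞) H Ω) {r : E} (hr : r ∈ Ω) :=
    hH.differentiableAt_of_isOpen hΩ hr
  have hleib : dirDeriv v (fun r => F r * G r) =ᶠ[𝓝 q]
      fun r => F r * dirDeriv v G r + G r * dirDeriv v F r := by
    filter_upwards [hΩ.mem_nhds hq] with r hr
    exact dirDeriv_mul (hdiff hF hr) (hdiff hG hr) v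
  rw [(hleib.dirDeriv w).self_of_nhds,
    dirDeriv_add (F := fun r => F r * dirDeriv v G r) (G := fun r => G r * dirDeriv v F r)
      ((hdiff hF hq).mul (hdiff (hG.dirDeriv hΩ v) hq))
      ((hdiff hG hq).mul (hdiff (hF.dirDeriv hΩ v) hq)),
    dirDeriv_mul (hdiff hF hq) (hdiff (hG.dirDeriv hΩ v) hq),
    dirDeriv_mul (hdiff hG hq) (hdiff (hF.dirDeriv hΩ v) hq)]
  ring

theorem tendsto_secondDiffQuot (hΩ : IsOpen Ω) (hV : ContDiffOn ℝ (⊤ : ℕ∞) V Ω) (hq : q ∈ Ω)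
    (v : E) :
    Tendsto (fun h : ℝ => (2 * V q - V (q + h • v) - V (q - h • v)) / h ^ 2) (𝓝[>] 0)
      (𝓝 (-dirDeriv v (dirDeriv v V) q)) := by
  have hline (t : ℝ) : HasDerivAt (fun t : ℝ => q + t • v) v t := by
    simpa using ((hasDerivAt_id t).smul_const v).const_add q
  have hmem : ∀ᶠ t in 𝓝 (0 : ℝ), q + t • v ∈ Ω :=
    (continuous_const.add (continuous_id.smul continuous_const)).continuousAt.preimage_mem_nhds
      (by simpa using hΩ.mem_nhds hq)
  have hφ : ∀ᶠ t in 𝓝 (0 : ℝ),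
      HasDerivAt (fun t => V (q + t • v)) (dirDeriv v V (q + t • v)) t := by
    filter_upwards [hmem] with t ht
    exact (hV.differentiableAt_of_isOpen hΩ ht).hasFDerivAt.comp_hasDerivAt t (hline t)
  have hφ' : HasDerivAt (fun t : ℝ => dirDeriv v V (q + t • v))
      (dirDeriv v (dirDeriv v V) q) 0 :=
    ((hV.dirDeriv hΩ v).differentiableAt_of_isOpen hΩ hq).hasFDerivAt.comp_hasDerivAt_of_eq
      (0 : ℝ) (hline 0) (by simp)
  refine (tendsto_secondDiffQuot_of_hasDerivAt hφ hφ').neg.congr fun h => ?_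
  simp only [neg_smul, zero_smul, add_zero, ← sub_eq_add_neg]
  ring

end DirDeriv

section HalfSpace

variable {n : ℕ} {a : ℝ} {Ω : Set (Hn n)} {U V W F G : Hn n → ℝ} {p : Hn n}

theorem pdX_eq_dirDeriv (V : Hn n → ℝ) (p : Hn n) (i : Fin n) :
    pdX n V p i = dirDeriv (EuclideanSpace.single i 1, 0) V p := rfl

theorem pdY_eq_dirDeriv (V : Hn n → ℝ) (p : Hn n) : pdY n V p = dirDeriv (0, 1) V p := rfl

theorem lapH_eq_sum_dirDeriv (V : Hn n → ℝ) (p : Hn n) :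
    lapH n V p = ∑ i, dirDeriv (EuclideanSpace.single i 1, 0)
        (dirDeriv (EuclideanSpace.single i 1, 0) V) p + dirDeriv (0, 1) (dirDeriv (0, 1) V) p :=
  rfl

theorem negLapIncH_eq_neg_lapH (hΩ : IsOpen Ω) (hV : ContDiffOn ℝ (⊤ : ℕ∞) V Ω)
    (hp : p ∈ Ω) : negLapIncH n V p = -lapH n V p := by
  have hlim := (tendsto_finsetSum Finset.univ fun i _ =>
    tendsto_secondDiffQuot hΩ hV hp ((EuclideanSpace.single i 1 : En n), (0 : ℝ))).add
      (tendsto_secondDiffQuot hΩ hV hp ((0 : En n), (1 : ℝ)))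
  rw [negLapIncH, hlim.liminf_eq, lapH_eq_sum_dirDeriv, Finset.sum_neg_distrib, neg_add]

theorem LaInc_eq_La (hΩ : IsOpen Ω) (hV : ContDiffOn ℝ (⊤ : ℕ∞) V Ω) (hp : p ∈ Ω) :
    LaInc n a V p = La n a V p := by
  rw [LaInc, La, negLapIncH_eq_neg_lapH hΩ hV hp]
  ring

theorem La_congr (h : V =ᶠ[𝓝 p] W) : La n a V p = La n a W p := by
  have h2 (v w : Hn n) := ((h.dirDeriv v).dirDeriv w).eq_of_nhds
  simp only [La, lapH_eq_sum_dirDeriv, pdY_eq_dirDeriv, h2, (h.dirDeriv _).eq_of_nhds]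

theorem LaInc_nonpos_of_isLocalMin (hp : 0 ≤ p.2) (hmin : IsLocalMin V p) :
    LaInc n a V p ≤ 0 := by
  have hquot (v : Hn n) :
      ∀ᶠ h in 𝓝[>] (0 : ℝ), (2 * V p - V (p + h • v) - V (p - h • v)) / h ^ 2 ≤ 0 := by
    have hline (c : ℝ) : Tendsto (fun h : ℝ => p + (c * h) • v) (𝓝 0) (𝓝 p) := by
      have hc : Continuous fun h : ℝ => p + (c * h) • v := by fun_prop
      simpa using hc.tendsto 0
    filter_upwards [nhdsWithin_le_nhds ((hline 1).eventually hmin),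
      nhdsWithin_le_nhds ((hline (-1)).eventually hmin)] with h h₁ h₂
    simp only [one_mul, neg_one_mul, neg_smul, ← sub_eq_add_neg] at h₁ h₂
    exact div_nonpos_of_nonpos_of_nonneg (by linarith) (sq_nonneg h)
  have hneg : negLapIncH n V p ≤ 0 := by
    refine Real.liminf_nonpos ?_
    filter_upwards [eventually_all.2 fun i : Fin n => hquot (EuclideanSpace.single i 1, 0),
      hquot (0, 1)] with h hx hy
    exact add_nonpos (Finset.sum_nonpos fun i _ => hx i) hy
  have hpdY : pdY n V p = 0 := by simp [pdY, hmin.fderiv_eq_zero]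
  rw [LaInc, hpdY, mul_zero, sub_zero]
  exact mul_nonpos_of_nonneg_of_nonpos (Real.rpow_nonneg hp a) hneg

theorem pdX_sq (hF : DifferentiableAt ℝ F p) (i : Fin n) :
    pdX n (fun r => F r ^ 2) p i = 2 * F p * pdX n F p i := by
  simp only [pdX_eq_dirDeriv, pow_two, dirDeriv_mul hF hF]
  ring

theorem pdY_sq (hF : DifferentiableAt ℝ F p) :
    pdY n (fun r => F r ^ 2) p = 2 * F p * pdY n F p := by
  simp only [pdY_eq_dirDeriv, pow_two, dirDeriv_mul hF hF]
  ring

theorem lapH_mul (hΩ : IsOpen Ω) (hF : ContDiffOn ℝ (⊤ : ℕ∞) F Ω)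
    (hG : ContDiffOn ℝ (⊤ : ℕ∞) G Ω) (hp : p ∈ Ω) :
    lapH n (fun r => F r * G r) p = F p * lapH n G p + G p * lapH n F p
      + 2 * (∑ i, pdX n F p i * pdX n G p i + pdY n F p * pdY n G p) := by
  have h (v : Hn n) : dirDeriv v (dirDeriv v (fun r => F r * G r)) p
      = F p * dirDeriv v (dirDeriv v G) p + G p * dirDeriv v (dirDeriv v F) p
        + 2 * (dirDeriv v F p * dirDeriv v G p) := by
    rw [dirDeriv_dirDeriv_mul hΩ hF hG hp]
    ring
  simp only [lapH_eq_sum_dirDeriv, h, Finset.sum_add_distrib, ← Finset.mul_sum, pdX_eq_dirDeriv,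
    pdY_eq_dirDeriv]
  ring

theorem La_mul (hΩ : IsOpen Ω) (hF : ContDiffOn ℝ (⊤ : ℕ∞) F Ω)
    (hG : ContDiffOn ℝ (⊤ : ℕ∞) G Ω) (hp : p ∈ Ω) :
    La n a (fun r => F r * G r) p = F p * La n a G p + G p * La n a F p
      - 2 * p.2 ^ a * (∑ i, pdX n F p i * pdX n G p i + pdY n F p * pdY n G p) := by
  have hF' := hF.differentiableAt_of_isOpen hΩ hp
  have hG' := hG.differentiableAt_of_isOpen hΩ hp
  simp only [La, lapH_mul hΩ hF hG hp, pdY_eq_dirDeriv, dirDeriv_mul hF' hG']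
  ring

theorem La_sq (hΩ : IsOpen Ω) (hF : ContDiffOn ℝ (⊤ : ℕ∞) F Ω) (hp : p ∈ Ω) :
    La n a (fun r => F r ^ 2) p = 2 * F p * La n a F p - 2 * p.2 ^ a * gradSq n F p := by
  simp only [pow_two, La_mul hΩ hF hF hp, gradSq]
  ring

theorem dirDeriv_comp_fst {f : En n → ℝ} (hf : DifferentiableAt ℝ f p.1) (v : En n) (t : ℝ) :
    dirDeriv (v, t) (fun r : Hn n => f r.1) p = fderiv ℝ f p.1 v := by
  change fderiv ℝ (f ∘ Prod.fst) p (v, t) = _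
  simp [(hf.hasFDerivAt.comp p hasFDerivAt_fst).fderiv]

theorem pdX_comp_fst {f : En n → ℝ} (hf : DifferentiableAt ℝ f p.1) (i : Fin n) :
    pdX n (fun r => f r.1) p i = fderiv ℝ f p.1 (EuclideanSpace.single i 1) :=
  dirDeriv_comp_fst hf _ _

theorem pdY_comp_fst {f : En n → ℝ} (hf : DifferentiableAt ℝ f p.1) :
    pdY n (fun r => f r.1) p = 0 := by
  simp [pdY_eq_dirDeriv, dirDeriv_comp_fst hf]

theorem La_comp_fst {f : En n → ℝ} (hf : ContDiff ℝ (⊤ : ℕ∞) f) (p : Hn n) :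
    La n a (fun r => f r.1) p = -(p.2 ^ a *
      ∑ i, fderiv ℝ (fderiv ℝ f) p.1 (EuclideanSpace.single i 1) (EuclideanSpace.single i 1)) := by
  have hf' : Differentiable ℝ f := hf.differentiable (by decide)
  have hdf : Differentiable ℝ (fderiv ℝ f) :=
    (hf.fderiv_right (m := (⊤ : ℕ∞)) le_rfl).differentiable (by decide)
  have hxx (i : Fin n) : dirDeriv (EuclideanSpace.single i 1, 0)
      (dirDeriv (EuclideanSpace.single i 1, 0) (fun r : Hn n => f r.1)) p
      = fderiv ℝ (fderiv ℝ f) p.1 (EuclideanSpace.single i 1) (EuclideanSpace.single i 1) := by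
    have hx : dirDeriv (EuclideanSpace.single i 1, 0) (fun r : Hn n => f r.1)
        = fun r => fderiv ℝ f r.1 (EuclideanSpace.single i 1) :=
      funext fun r => dirDeriv_comp_fst (hf' _) _ _
    rw [hx, dirDeriv_comp_fst (f := fun x => fderiv ℝ f x (EuclideanSpace.single i 1))
      ((hdf p.1).clm_apply (differentiableAt_const _)),
      fderiv_clm_apply (hdf p.1) (differentiableAt_const _)]
    simp
  have hy : dirDeriv (0, 1) (fun r : Hn n => f r.1) = fun _ => 0 :=
    funext fun r => pdY_comp_fst (hf' r.1)
  simp only [La, lapH_eq_sum_dirDeriv, hxx, hy, pdY_comp_fst (hf' p.1)]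
  simp [dirDeriv]

theorem La_sq_comp_fst_mul_sq {ζ : En n → ℝ} (hζ : ContDiff ℝ (⊤ : ℕ∞) ζ) (hΩ : IsOpen Ω)
    {g : Hn n → ℝ} (hg : ContDiffOn ℝ (⊤ : ℕ∞) g Ω) (hp : p ∈ Ω) (hLag : La n a g p = 0) :
    La n a (fun q => ζ q.1 ^ 2 * g q ^ 2) p = -(p.2 ^ a * (2 * ζ p.1 ^ 2 * gradSq n g p
      + g p ^ 2 * (2 * ∑ i, fderiv ℝ ζ p.1 (EuclideanSpace.single i 1) ^ 2
        + 2 * ζ p.1 * ∑ i, fderiv ℝ (fderiv ℝ ζ) p.1 (EuclideanSpace.single i 1)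
            (EuclideanSpace.single i 1))
      + 8 * ζ p.1 * g p * ∑ i, fderiv ℝ ζ p.1 (EuclideanSpace.single i 1) * pdX n g p i)) := by
  have hζ' : ContDiffOn ℝ (⊤ : ℕ∞) (fun q : Hn n => ζ q.1) Ω :=
    (hζ.comp contDiff_fst).contDiffOn
  have hdζ : DifferentiableAt ℝ ζ p.1 := hζ.differentiable (by decide) _
  have hdζ' := hζ'.differentiableAt_of_isOpen hΩ hp
  have hdg := hg.differentiableAt_of_isOpen hΩ hp
  rw [La_mul (F := fun q => ζ q.1 ^ 2) (G := fun q => g q ^ 2) hΩ (hζ'.pow 2) (hg.pow 2) hp,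
    La_sq hΩ hg hp, La_sq hΩ hζ' hp, La_comp_fst hζ, hLag]
  simp only [pdX_sq hdζ', pdX_sq hdg, pdY_sq hdζ', pdY_sq hdg, pdX_comp_fst hdζ,
    pdY_comp_fst hdζ, gradSq]
  simp only [Finset.mul_sum, mul_add, mul_sub, mul_neg]
  ring_nf

theorem dirDeriv_mul_comp_snd {h : ℝ → ℝ} (hh : DifferentiableAt ℝ h p.2)
    (hF : DifferentiableAt ℝ F p) (v : En n) :
    dirDeriv (v, 0) (fun r => h r.2 * F r) p = h p.2 * dirDeriv (v, 0) F p := by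
  have hsnd : HasFDerivAt (fun r : Hn n => h r.2)
      ((fderiv ℝ h p.2).comp (ContinuousLinearMap.snd ℝ (En n) ℝ)) p :=
    hh.hasFDerivAt.comp p hasFDerivAt_snd
  rw [dirDeriv_mul hsnd.differentiableAt hF]
  simp [dirDeriv, hsnd.fderiv]

theorem dirDeriv_lapH (hΩ : IsOpen Ω) (hU : ContDiffOn ℝ (⊤ : ℕ∞) U Ω) (hp : p ∈ Ω)
    (w : Hn n) : dirDeriv w (lapH n U) p = lapH n (dirDeriv w U) p := by
  have hdd (v : Hn n) := ((hU.dirDeriv hΩ v).dirDeriv hΩ v).differentiableAt_of_isOpen hΩ hp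
  change dirDeriv w (fun r => (∑ i, dirDeriv _ (dirDeriv _ U) r) + dirDeriv _ (dirDeriv _ U) r) p
    = _
  rw [dirDeriv_add (DifferentiableAt.fun_sum fun i _ => hdd _) (hdd _),
    dirDeriv_sum fun i _ => hdd _, lapH_eq_sum_dirDeriv]
  exact congr_arg₂ (· + ·) (Finset.sum_congr rfl fun i _ =>
    dirDeriv_dirDeriv_dirDeriv_comm hΩ hU hp _ w) (dirDeriv_dirDeriv_dirDeriv_comm hΩ hU hp _ w)

theorem dirDeriv_pdY (hΩ : IsOpen Ω) (hU : ContDiffOn ℝ (⊤ : ℕ∞) U Ω) (hp : p ∈ Ω)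
    (w : Hn n) : dirDeriv w (pdY n U) p = pdY n (dirDeriv w U) p :=
  dirDeriv_comm hΩ hU hp _ _

theorem La_dirDeriv_eq_zero (hU : ContDiffOn ℝ (⊤ : ℕ∞) U {q | 0 < q.2})
    (hLa : ∀ q : Hn n, 0 < q.2 → La n a U q = 0) (v : En n) (hp : 0 < p.2) :
    La n a (dirDeriv (v, 0) U) p = 0 := by
  have hΩ : IsOpen {q : Hn n | 0 < q.2} := isOpen_lt continuous_const continuous_snd
  have hdd (w w' : Hn n) :=
    ((hU.dirDeriv hΩ w).dirDeriv hΩ w').differentiableAt_of_isOpen hΩ hp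
  have hlap : DifferentiableAt ℝ (lapH n U) p :=
    (DifferentiableAt.fun_sum fun i _ => hdd _ _).add (hdd _ _)
  have hpdY : DifferentiableAt ℝ (pdY n U) p :=
    (hU.dirDeriv hΩ _).differentiableAt_of_isOpen hΩ hp
  have hrpow (b : ℝ) : DifferentiableAt ℝ (fun t : ℝ => t ^ b) p.2 :=
    differentiableAt_id.rpow_const (Or.inl hp.ne')
  have hLa0 : La n a U =ᶠ[𝓝 p] fun _ => 0 := by
    filter_upwards [hΩ.mem_nhds hp] with q hq
    exact hLa q hq
  -- the coefficients of `L_a` depend on `y` only, so `L_a` commutes with `∂_{(v, 0)}`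
  have hderiv : dirDeriv (v, 0) (La n a U) p = La n a (dirDeriv (v, 0) U) p := by
    change dirDeriv (v, 0) (fun r => -(r.2 ^ a * lapH n U r + a * r.2 ^ (a - 1) * pdY n U r)) p
      = _
    have hX := dirDeriv_mul_comp_snd (h := fun t => t ^ a) (hrpow a) hlap v
    have hY := dirDeriv_mul_comp_snd (h := fun t => a * t ^ (a - 1)) ((hrpow _).const_mul a)
      hpdY v
    rw [La, dirDeriv_neg, dirDeriv_add (F := fun r => r.2 ^ a * lapH n U r)
      (G := fun r => a * r.2 ^ (a - 1) * pdY n U r)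
      (((hrpow a).comp p differentiableAt_snd).mul hlap)
      ((((hrpow _).const_mul a).comp p differentiableAt_snd).mul hpdY), hX, hY,
      dirDeriv_lapH hΩ hU hp, dirDeriv_pdY hΩ hU hp]
  rw [← hderiv, (hLa0.dirDeriv _).eq_of_nhds]
  simp [dirDeriv]

end HalfSpace

theorem sum_cutoff_quadratic_lower_bound {ι : Type*} (s : Finset ι) {M ρ z g gy : ℝ}
    (B b c : ι → ℝ) (hz : |z| ≤ M) (hb : ∀ i, |b i| ≤ M * ρ)
    (hc : ∀ i, |c i| ≤ M * ρ ^ 2) :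
    -(8 * s.card * M ^ 2 * ρ ^ 2 * g ^ 2) ≤ 2 * z ^ 2 * (∑ i ∈ s, B i ^ 2 + gy ^ 2)
      + g ^ 2 * (2 * ∑ i ∈ s, b i ^ 2 + 2 * z * ∑ i ∈ s, c i)
      + 8 * z * g * ∑ i ∈ s, b i * B i := by
  have hM : 0 ≤ M := (abs_nonneg z).trans hz
  have hi : ∀ i ∈ s, -(8 * M ^ 2 * ρ ^ 2 * g ^ 2)
      ≤ 2 * z ^ 2 * B i ^ 2 + g ^ 2 * (2 * b i ^ 2 + 2 * z * c i) + 8 * z * g * (b i * B i) := by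
    intro i _
    have hb2 : g ^ 2 * b i ^ 2 ≤ g ^ 2 * (M * ρ) ^ 2 :=
      mul_le_mul_of_nonneg_left (sq_le_sq' (abs_le.1 (hb i)).1 (abs_le.1 (hb i)).2) (sq_nonneg g)
    have hzc : -(M * (M * ρ ^ 2)) ≤ z * c i :=
      neg_le_of_abs_le (abs_mul z (c i) ▸ mul_le_mul hz (hc i) (abs_nonneg _) hM)
    have hzc' := mul_le_mul_of_nonneg_left hzc (sq_nonneg g)
    -- completing the square in `z * B i`
    nlinarith [sq_nonneg (z * B i + 2 * g * b i)]
  have hsum := Finset.sum_le_sum hi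
  rw [Finset.sum_const, nsmul_eq_mul] at hsum
  have hsplit : 2 * z ^ 2 * (∑ i ∈ s, B i ^ 2 + gy ^ 2)
      + g ^ 2 * (2 * ∑ i ∈ s, b i ^ 2 + 2 * z * ∑ i ∈ s, c i) + 8 * z * g * ∑ i ∈ s, b i * B i
      = ∑ i ∈ s, (2 * z ^ 2 * B i ^ 2 + g ^ 2 * (2 * b i ^ 2 + 2 * z * c i)
          + 8 * z * g * (b i * B i)) + 2 * z ^ 2 * gy ^ 2 := by
    simp only [mul_add, Finset.sum_add_distrib, Finset.mul_sum]
    ring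
  rw [hsplit]
  nlinarith [sq_nonneg (z * gy)]

section Cutoff

variable {n : ℕ} {η : En n → ℝ} {M : ℝ}

theorem C2BddBy.abs_fderiv_comp_smul_le (hM : C2BddBy n η M) (c : ℝ) (x v : En n) :
    |fderiv ℝ (fun y => η (c • y)) x v| ≤ M * |c| * ‖v‖ := by
  rw [fderiv_comp_smul, FunLike.coe_smul, Pi.smul_apply, smul_eq_mul, abs_mul, mul_assoc,
    mul_left_comm]
  exact mul_le_mul_of_nonneg_left
    (((fderiv ℝ η (c • x)).le_opNorm v).trans
      (mul_le_mul_of_nonneg_right (hM _).2.1 (norm_nonneg v))) (abs_nonneg c)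

theorem C2BddBy.abs_fderiv_fderiv_comp_smul_le (hM : C2BddBy n η M) (c : ℝ) (x v : En n) :
    |fderiv ℝ (fderiv ℝ fun y => η (c • y)) x v v| ≤ M * c ^ 2 * ‖v‖ ^ 2 := by
  rw [fderiv_fderiv_comp_smul, FunLike.coe_smul, Pi.smul_apply, FunLike.coe_smul,
    Pi.smul_apply, smul_eq_mul, abs_mul, abs_mul_self, ← pow_two, mul_assoc, mul_left_comm]
  refine mul_le_mul_of_nonneg_left ?_ (sq_nonneg c)
  calc |fderiv ℝ (fderiv ℝ η) (c • x) v v|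
      ≤ ‖fderiv ℝ (fderiv ℝ η) (c • x)‖ * ‖v‖ * ‖v‖ :=
        (fderiv ℝ (fderiv ℝ η) (c • x)).le_opNorm₂ v v
    _ ≤ M * ‖v‖ ^ 2 := by
        rw [mul_assoc, ← pow_two]
        exact mul_le_mul_of_nonneg_right (hM _).2.2 (sq_nonneg _)

theorem mem_ball_of_comp_smul_ne_zero (hsupp : tsupport η ⊆ ball 0 (1 / 2)) {R : ℝ}
    (hR : 0 < R) {x : En n} (hx : η (R⁻¹ • x) ≠ 0) : x ∈ ball (0 : En n) (R / 2) := by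
  have h := hsupp (subset_tsupport η hx)
  rw [mem_ball_zero_iff, norm_smul, Real.norm_eq_abs, abs_of_pos (inv_pos.2 hR),
    inv_mul_lt_iff₀ hR] at h
  rw [mem_ball_zero_iff]
  linarith

end Cutoff

theorem LaInc_cutoff_sq_mul_posPart_sq_le {n : ℕ} {a : ℝ} {g : Hn n → ℝ}
    (hg : ContDiffOn ℝ (⊤ : ℕ∞) g {q | 0 < q.2})
    (hLag : ∀ q : Hn n, 0 < q.2 → La n a g q = 0) {η : En n → ℝ} (hη : ContDiff ℝ (⊤ : ℕ∞) η)
    (hsupp : tsupport η ⊆ ball 0 (1 / 2)) {M : ℝ} (hM : C2BddBy n η M) {R : ℝ} (hR : 0 < R)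
    {p : Hn n} (hp : 0 < p.2) :
    LaInc n a (fun q => (η (R⁻¹ • q.1)) ^ 2 * (max (g q) 0) ^ 2) p
      ≤ (8 * n * M ^ 2 + 1) * (Set.indicator (ball (0 : En n) (R / 2)) (fun _ => (1 : ℝ)) p.1)
          * R⁻¹ ^ 2 * p.2 ^ a * (g p) ^ 2 := by
  have hya : 0 < p.2 ^ a := Real.rpow_pos_of_pos hp a
  by_cases hΨp : η (R⁻¹ • p.1) ^ 2 * max (g p) 0 ^ 2 = 0
  · have hmin : IsLocalMin (fun q : Hn n => η (R⁻¹ • q.1) ^ 2 * max (g q) 0 ^ 2) p :=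
      IsMinOn.isLocalMin (isMinOn_iff.2 fun q _ => by rw [hΨp]; positivity) univ_mem
    have hind := Set.indicator_nonneg (fun _ _ => zero_le_one (α := ℝ)) p.1
      (s := ball (0 : En n) (R / 2))
    exact (LaInc_nonpos_of_isLocalMin hp.le hmin).trans
      (mul_nonneg (mul_nonneg (mul_nonneg (mul_nonneg (by positivity) hind) (by positivity))
        hya.le) (sq_nonneg _))
  obtain ⟨hηp, hgp⟩ : η (R⁻¹ • p.1) ≠ 0 ∧ 0 < g p := by
    simpa [not_or, not_le] using hΨp
  set ζ : En n → ℝ := fun x => η (R⁻¹ • x)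
  have hζ : ContDiff ℝ (⊤ : ℕ∞) ζ := hη.comp (contDiff_id.const_smul R⁻¹)
  set N := {q : Hn n | 0 < q.2} ∩ g ⁻¹' Ioi 0
  have hN : IsOpen N :=
    hg.continuousOn.isOpen_inter_preimage (isOpen_lt continuous_const continuous_snd) isOpen_Ioi
  have hpN : p ∈ N := ⟨hp, hgp⟩
  have hW : ContDiffOn ℝ (⊤ : ℕ∞) (fun q => ζ q.1 ^ 2 * g q ^ 2) N :=
    ((hζ.comp contDiff_fst).pow 2).contDiffOn.mul ((hg.mono inter_subset_left).pow 2)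
  have hΨW : EqOn (fun q => ζ q.1 ^ 2 * max (g q) 0 ^ 2) (fun q => ζ q.1 ^ 2 * g q ^ 2) N :=
    fun q hq => by dsimp only; rw [max_eq_left (show 0 < g q from hq.2).le]
  rw [LaInc_eq_La hN (hW.congr hΨW) hpN, La_congr (hΨW.eventuallyEq_of_mem (hN.mem_nhds hpN)),
    La_sq_comp_fst_mul_sq hζ hN (hg.mono inter_subset_left) hpN (hLag p hp),
    indicator_of_mem (mem_ball_of_comp_smul_ne_zero hsupp hR hηp), mul_one]
  have hQ := sum_cutoff_quadratic_lower_bound Finset.univ (M := M) (ρ := R⁻¹) (z := ζ p.1)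
    (g := g p) (gy := pdY n g p) (fun i => pdX n g p i)
    (fun i => fderiv ℝ ζ p.1 (EuclideanSpace.single i 1))
    (fun i => fderiv ℝ (fderiv ℝ ζ) p.1 (EuclideanSpace.single i 1) (EuclideanSpace.single i 1))
    (hM (R⁻¹ • p.1)).1
    (fun i => by
      simpa [abs_of_pos hR] using hM.abs_fderiv_comp_smul_le R⁻¹ p.1 (EuclideanSpace.single i 1))
    (fun i => by
      simpa [abs_of_pos hR] using
        hM.abs_fderiv_fderiv_comp_smul_le R⁻¹ p.1 (EuclideanSpace.single i 1))
  rw [Finset.card_univ, Fintype.card_fin] at hQ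
  rw [gradSq]
  nlinarith [mul_le_mul_of_nonneg_left hQ hya.le, sq_nonneg (R⁻¹ * g p)]

theorem extension_second_derivative_estimate_general (n : ℕ) :
    ∃ Cf : ℝ → ℝ, (∀ M : ℝ, 0 < Cf M) ∧
      ∀ (s : ℝ), s ∈ Set.Ioo (0:ℝ) 1 →
      ∀ (u : En n → ℝ), ContDiff ℝ (⊤ : ℕ∞) u →
        (∃ Mu : ℝ, ∀ x, |u x| ≤ Mu ∧ ‖fderiv ℝ u x‖ ≤ Mu ∧ ‖fderiv ℝ (fderiv ℝ u) x‖ ≤ Mu) →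
      ∀ (U : Hn n → ℝ), IsBoundedExtension n (1 - 2*s) u U →
      -- the cutoff `η̄ ∈ C_c^∞(B_{1/2})`, and `η̄_R = η̄(·/R)`
      ∀ (ηb : En n → ℝ),
        ContDiff ℝ (⊤ : ℕ∞) ηb → HasCompactSupport ηb →
        tsupport ηb ⊆ ball (0 : En n) (1/2) →
      ∀ (M : ℝ), C2BddBy n ηb M →
      ∀ (R : ℝ), 0 < R →
      ∀ (e : En n), ‖e‖ = 1 →
      ∀ p : Hn n, 0 < p.2 →
        LaInc n (1 - 2*s)
            (fun q => (ηb (R⁻¹ • q.1))^2 * (max (pdE n e (pdE n e U) q) 0)^2) p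
          ≤ Cf M * (Set.indicator (ball (0 : En n) (R/2)) (fun _ => (1:ℝ)) p.1)
              * R⁻¹^2 * p.2 ^ (1 - 2*s) * (pdE n e (pdE n e U) p)^2 := by
  refine ⟨fun M => 8 * n * M ^ 2 + 1, fun M => by positivity, ?_⟩
  intro s _ u _ _ U hU ηb hηb _ hsupp M hM R hR e _ p hp
  obtain ⟨-, hUsmooth, -, -, hLaU⟩ := hU
  have hΩ : IsOpen {q : Hn n | 0 < q.2} := isOpen_lt continuous_const continuous_snd
  have hUe := hUsmooth.dirDeriv hΩ (e, 0)
  have hLaUe (q : Hn n) (hq : 0 < q.2) := La_dirDeriv_eq_zero hUsmooth hLaU e hq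
  exact LaInc_cutoff_sq_mul_posPart_sq_le (hUe.dirDeriv hΩ (e, 0))
    (fun q hq => La_dirDeriv_eq_zero hUe hLaUe e hq) hηb hsupp hM hR hp

/-- estimate for `Ψ₂ = η̄_R² ((∂²_e U)₊)²` in the extended space:
`L_a Ψ₂ ≤ C χ_{B_{R/2}} R⁻² y^a (∂²_e U)²` everywhere in `ℝ^{n+1}_+`, with
`C = C(n, ‖η̄‖_{C²})`, the operator being computed in nondivergence form with the
Laplacian defined via the liminf of second incremental quotients. -/
theorem extension_second_derivative_estimate (n : ℕ) (hn : 0 < n) :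
    ∃ Cf : ℝ → ℝ, (∀ M : ℝ, 0 < Cf M) ∧
      ∀ (s : ℝ), s ∈ Set.Ioo (0:ℝ) 1 →
      ∀ (u : En n → ℝ), ContDiff ℝ (⊤ : ℕ∞) u →
        (∃ Mu : ℝ, ∀ x, |u x| ≤ Mu ∧ ‖fderiv ℝ u x‖ ≤ Mu ∧ ‖fderiv ℝ (fderiv ℝ u) x‖ ≤ Mu) →
      ∀ (U : Hn n → ℝ), IsBoundedExtension n (1 - 2*s) u U →
      -- the cutoff `η̄ ∈ C_c^∞(B_{1/2})`, and `η̄_R = η̄(·/R)`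
      ∀ (ηb : En n → ℝ),
        ContDiff ℝ (⊤ : ℕ∞) ηb → HasCompactSupport ηb →
        tsupport ηb ⊆ ball (0 : En n) (1/2) →
      ∀ (M : ℝ), C2BddBy n ηb M →
      ∀ (R : ℝ), 0 < R →
      ∀ (e : En n), ‖e‖ = 1 →
      ∀ p : Hn n, 0 < p.2 →
        LaInc n (1 - 2*s)
            (fun q => (ηb (R⁻¹ • q.1))^2 * (max (pdE n e (pdE n e U) q) 0)^2) p
          ≤ Cf M * (Set.indicator (ball (0 : En n) (R/2)) (fun _ => (1:ℝ)) p.1)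
              * R⁻¹^2 * p.2 ^ (1 - 2*s) * (pdE n e (pdE n e U) p)^2 :=
  extension_second_derivative_estimate_general n
end
end

section
/- Let m ≥ 0 be an integer, u ∈ C^m(B₅) with B₅ ⊂ ℝ^n, and σ₀ ≥ 0. Assume that for every ε > 0 there exists a constant C_ε ≥ 0 such that Σ_{k=0}^m ρ^k ‖D^k u‖_{L^∞(B_ρ(x))} ≤ C_ε σ₀ + ε Σ_{k=0}^m ρ^k ‖D^k u‖_{L^∞(B_{3ρ}(x))} for every x ∈ B₂ and every ρ ∈ (0,1). Then Σ_{k=0}^m ‖D^k u‖_{L^∞(B_{1/2})} ≤ C σ₀, where C is a constant depending only on m and on the value of C_ε at ε := (2(m+1)4^{m+1})^{-1}. -/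
open MeasureTheory Filter Metric Set

noncomputable section

/-- `sup_{y ∈ B_ρ(x)} ‖D^k u(y)‖`, the derivatives being taken within `B₅`. -/
def supDeriv (n : ℕ) (u : En n → ℝ) (k : ℕ) (x : En n) (ρ : ℝ) : ℝ :=
  ⨆ y ∈ ball x ρ, ‖iteratedFDerivWithin ℝ k u (ball (0 : En n) 5) y‖

lemma supDeriv_nonneg (n : ℕ) (u : En n → ℝ) (k : ℕ) (x : En n) (ρ : ℝ) :
    0 ≤ supDeriv n u k x ρ :=
  Real.iSup_nonneg fun _ => Real.iSup_nonneg fun _ => norm_nonneg _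

lemma supDeriv_le {n : ℕ} {u : En n → ℝ} {k : ℕ} {x : En n} {ρ K : ℝ} (hK : 0 ≤ K)
    (h : ∀ y ∈ ball x ρ, ‖iteratedFDerivWithin ℝ k u (ball (0 : En n) 5) y‖ ≤ K) :
    supDeriv n u k x ρ ≤ K :=
  Real.iSup_le (fun y => Real.iSup_le (fun hy => h y hy) hK) hK

lemma le_supDeriv {n : ℕ} {u : En n → ℝ} {k : ℕ} {x y : En n} {ρ K : ℝ}
    (hy : y ∈ ball x ρ)
    (h : ∀ z ∈ ball x ρ, ‖iteratedFDerivWithin ℝ k u (ball (0 : En n) 5) z‖ ≤ K) :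
    ‖iteratedFDerivWithin ℝ k u (ball (0 : En n) 5) y‖ ≤ supDeriv n u k x ρ := by
  have hbdd : BddAbove (Set.range fun z => ⨆ _ : z ∈ ball x ρ,
      ‖iteratedFDerivWithin ℝ k u (ball (0 : En n) 5) z‖) := by
    refine ⟨max K 0, ?_⟩
    rintro _ ⟨z, rfl⟩
    dsimp only
    by_cases hz : z ∈ ball x ρ
    · haveI : Nonempty (z ∈ ball x ρ) := ⟨hz⟩
      rw [ciSup_const]
      exact le_max_of_le_left (h z hz)
    · haveI : IsEmpty (z ∈ ball x ρ) := ⟨hz⟩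
      rw [Real.iSup_of_isEmpty]
      exact le_max_right _ _
  have h1 : ‖iteratedFDerivWithin ℝ k u (ball (0 : En n) 5) y‖
      = ⨆ _ : y ∈ ball x ρ, ‖iteratedFDerivWithin ℝ k u (ball (0 : En n) 5) y‖ := by
    haveI : Nonempty (y ∈ ball x ρ) := ⟨hy⟩
    exact ciSup_const.symm
  rw [h1]
  exact le_ciSup hbdd y

/-- scaled interior estimates.  If `u ∈ C^m(B₅)` satisfies, for every
`ε > 0`, `Σ_{k≤m} ρ^k ‖D^k u‖_{L^∞(B_ρ(x))} ≤ C_ε σ₀ + ε Σ_{k≤m} ρ^k ‖D^k u‖_{L^∞(B_{3ρ}(x))}`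
for all `x ∈ B₂` and `ρ ∈ (0,1)`, then `Σ_{k≤m} ‖D^k u‖_{L^∞(B_{1/2})} ≤ C σ₀`, with `C`
depending only on `m` and on the value of `C_ε` at `ε = (2(m+1)4^{m+1})⁻¹`. -/
theorem scaled_inequalities_absorption (m : ℕ) :
    ∃ Cbig : ℝ → ℝ,
      ∀ (n : ℕ) (u : En n → ℝ), ContDiffOn ℝ (m : ℕ∞) u (ball (0 : En n) 5) →
      ∀ (σ₀ : ℝ), 0 ≤ σ₀ →
      ∀ (Cfun : ℝ → ℝ),
        (∀ ε : ℝ, 0 < ε → 0 ≤ Cfun ε ∧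
          ∀ x ∈ ball (0 : En n) 2, ∀ ρ ∈ Set.Ioo (0:ℝ) 1,
            ∑ k ∈ Finset.range (m+1), ρ^k * supDeriv n u k x ρ ≤
              Cfun ε * σ₀ + ε * ∑ k ∈ Finset.range (m+1), ρ^k * supDeriv n u k x (3*ρ)) →
        ∑ k ∈ Finset.range (m+1), supDeriv n u k 0 (1/2) ≤
          Cbig (Cfun ((2 * (m+1) * 4^(m+1) : ℝ)⁻¹)) * σ₀ := by
  refine ⟨fun c => 2 * (m+1) * 4^m * c, ?_⟩
  intro n u hu σ₀ hσ₀ Cfun hC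
  set ε₀ : ℝ := (2 * (m+1) * 4^(m+1) : ℝ)⁻¹ with hε₀def
  have hε₀pos : 0 < ε₀ := by positivity
  obtain ⟨hc0, hineq⟩ := hC ε₀ hε₀pos
  set c : ℝ := Cfun ε₀ with hcdef
  -- a uniform bound for all derivatives up to order m on the closed ball of radius 3
  have hcont : ∀ k : ℕ, k ≤ m →
      ContinuousOn (iteratedFDerivWithin ℝ k u (ball (0:En n) 5)) (closedBall (0:En n) 3) := by
    intro k hk
    exact (hu.continuousOn_iteratedFDerivWithin (by exact_mod_cast hk)
      isOpen_ball.uniqueDiffOn).mono (closedBall_subset_ball (by norm_num))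
  have hbd : ∀ k : ℕ, ∃ Kk : ℝ, ∀ y ∈ closedBall (0:En n) 3,
      k ≤ m → ‖iteratedFDerivWithin ℝ k u (ball (0:En n) 5) y‖ ≤ Kk := by
    intro k
    by_cases hk : k ≤ m
    · obtain ⟨Kk, hKk⟩ :=
        (isCompact_closedBall (0:En n) 3).exists_bound_of_continuousOn (hcont k hk)
      exact ⟨Kk, fun y hy _ => hKk y hy⟩
    · exact ⟨0, fun y _ hk' => absurd hk' hk⟩
  choose K' hK' using hbd
  set K : ℝ := max 0 ((Finset.range (m+1)).sup' ⟨0, by simp⟩ K') with hKdef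
  have hK0 : 0 ≤ K := le_max_left _ _
  have hKb : ∀ k, k ≤ m → ∀ y ∈ closedBall (0:En n) 3,
      ‖iteratedFDerivWithin ℝ k u (ball (0:En n) 5) y‖ ≤ K := by
    intro k hk y hy
    exact (hK' k y hy hk).trans (le_max_of_le_right
      (Finset.le_sup' K' (Finset.mem_range.mpr (Nat.lt_succ_of_le hk))))
  -- the weight function
  set r : En n → ℝ := fun x => (2 - ‖x‖) / 6 with hrdef
  have hreq : ∀ x : En n, r x = (2 - ‖x‖) / 6 := fun x => rfl
  have hrpos : ∀ x : En n, ‖x‖ < 2 → 0 < r x := by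
    intro x hx; rw [hreq]; linarith
  have hrle : ∀ x : En n, r x ≤ 1/3 := by
    intro x; have := norm_nonneg x; rw [hreq]; linarith
  have hball3 : ∀ x : En n, ‖x‖ < 2 → ∀ ρ : ℝ, ρ ≤ 1 → ball x ρ ⊆ closedBall (0:En n) 3 := by
    intro x hx ρ hρ z hz
    rw [mem_ball] at hz
    rw [mem_closedBall, dist_zero_right]
    have h1 := dist_triangle z x (0:En n)
    rw [dist_zero_right, dist_zero_right] at h1
    linarith
  -- the function to absorb
  set F : En n → ℝ := fun x => ∑ k ∈ Finset.range (m+1), (r x)^k * supDeriv n u k x (r x)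
    with hFdef
  have hFeq : ∀ x, F x = ∑ k ∈ Finset.range (m+1), (r x)^k * supDeriv n u k x (r x) :=
    fun x => rfl
  have hFub : ∀ x ∈ ball (0:En n) 2, F x ≤ (m+1) * K := by
    intro x hx
    rw [mem_ball_zero_iff] at hx
    have h1 : ∀ k ∈ Finset.range (m+1), (r x)^k * supDeriv n u k x (r x) ≤ 1 * K := by
      intro k hk
      have hk' := Nat.lt_succ_iff.mp (Finset.mem_range.mp hk)
      have hsup : supDeriv n u k x (r x) ≤ K :=
        supDeriv_le hK0 (fun y hy => hKb k hk' y
          (hball3 x hx _ ((hrle x).trans (by norm_num)) hy))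
      have hr0 : 0 ≤ r x := le_of_lt (hrpos x hx)
      have hrk : (r x)^k ≤ 1 := pow_le_one₀ hr0 ((hrle x).trans (by norm_num))
      exact mul_le_mul hrk hsup (supDeriv_nonneg n u k x (r x)) one_pos.le
    calc F x ≤ ∑ _k ∈ Finset.range (m+1), 1 * K := Finset.sum_le_sum h1
      _ = (m+1) * K := by
          rw [Finset.sum_const, Finset.card_range, nsmul_eq_mul]; push_cast; ring
  have h02 : ‖(0:En n)‖ < 2 := by rw [norm_zero]; norm_num
  set M : ℝ := sSup (F '' ball (0:En n) 2) with hMdef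
  have hne : (F '' ball (0:En n) 2).Nonempty :=
    ⟨F 0, ⟨0, mem_ball_zero_iff.mpr h02, rfl⟩⟩
  have hbdd : BddAbove (F '' ball (0:En n) 2) := by
    refine ⟨(m+1) * K, ?_⟩
    rintro _ ⟨x, hx, rfl⟩
    exact hFub x hx
  have hFM : ∀ x ∈ ball (0:En n) 2, F x ≤ M := fun x hx => le_csSup hbdd ⟨x, hx, rfl⟩
  have hF0 : 0 ≤ F 0 := by
    rw [hFeq]
    refine Finset.sum_nonneg fun k _ => mul_nonneg (pow_nonneg ?_ _) (supDeriv_nonneg n u k 0 (r 0))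
    exact le_of_lt (hrpos 0 h02)
  have hM0 : 0 ≤ M := hF0.trans (hFM 0 (mem_ball_zero_iff.mpr h02))
  -- key pointwise bound
  have hpt : ∀ y : En n, ‖y‖ < 2 → ∀ k, k ≤ m →
      (r y)^k * ‖iteratedFDerivWithin ℝ k u (ball (0:En n) 5) y‖ ≤ M := by
    intro y hy k hk
    have hry := hrpos y hy
    have h1 : ‖iteratedFDerivWithin ℝ k u (ball (0:En n) 5) y‖ ≤ supDeriv n u k y (r y) :=
      le_supDeriv (mem_ball_self hry) (fun z hz => hKb k hk z
        (hball3 y hy _ ((hrle y).trans (by norm_num)) hz))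
    have h2 : (r y)^k * supDeriv n u k y (r y) ≤ F y := by
      rw [hFeq]
      exact Finset.single_le_sum
        (f := fun k => (r y)^k * supDeriv n u k y (r y))
        (fun i _ => mul_nonneg (pow_nonneg hry.le _) (supDeriv_nonneg n u i y (r y)))
        (Finset.mem_range.mpr (Nat.lt_succ_of_le hk))
    have h3 := hFM y (mem_ball_zero_iff.mpr hy)
    calc (r y)^k * ‖iteratedFDerivWithin ℝ k u (ball (0:En n) 5) y‖
        ≤ (r y)^k * supDeriv n u k y (r y) :=
          mul_le_mul_of_nonneg_left h1 (pow_nonneg hry.le k)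
      _ ≤ F y := h2
      _ ≤ M := h3
  -- the smallness constant
  have h24 : (2:ℝ)^m ≤ 4^(m+1) := by
    calc (2:ℝ)^m ≤ 4^m := pow_le_pow_left₀ (by norm_num) (by norm_num) m
      _ ≤ 4^(m+1) := by
          rw [pow_succ]
          nlinarith [pow_pos (show (0:ℝ) < 4 by norm_num) m]
  have h2m : ε₀ * (((m:ℝ)+1) * 2^m) ≤ 1/2 := by
    rw [hε₀def, inv_mul_le_iff₀ (by positivity)]
    have hm1 : (0:ℝ) ≤ (m:ℝ) + 1 := by positivity
    nlinarith [mul_le_mul_of_nonneg_left h24 hm1]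
  -- absorption
  have habs : ∀ x ∈ ball (0:En n) 2, F x ≤ c * σ₀ + (1/2) * M := by
    intro x hx
    have hx2 : ‖x‖ < 2 := mem_ball_zero_iff.mp hx
    have hrx := hrpos x hx2
    have hmain := hineq x hx (r x) ⟨hrx, lt_of_le_of_lt (hrle x) (by norm_num)⟩
    have hterm : ∀ k ∈ Finset.range (m+1),
        (r x)^k * supDeriv n u k x (3 * r x) ≤ 2^m * M := by
      intro k hk
      have hk' := Nat.lt_succ_iff.mp (Finset.mem_range.mp hk)
      have hsd : supDeriv n u k x (3 * r x) ≤ 2^k * M / (r x)^k := by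
        apply supDeriv_le (by positivity)
        intro z hz
        have hzx : dist z x < 3 * r x := mem_ball.mp hz
        have hzn : ‖z‖ ≤ dist z x + ‖x‖ := by
          rw [dist_eq_norm]
          simpa using norm_add_le (z - x) x
        have hrx' : r x = (2 - ‖x‖)/6 := hreq x
        have hz2 : ‖z‖ < 2 := by linarith
        have hzub : ‖z‖ < (2 + ‖x‖)/2 := by linarith
        have hrz : r x / 2 ≤ r z := by rw [hreq z, hrx']; linarith
        have hz3 := hpt z hz2 k hk'
        have hpow : (r x)^k ≤ 2^k * (r z)^k := by
          calc (r x)^k ≤ (2 * r z)^k := pow_le_pow_left₀ hrx.le (by linarith) k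
            _ = 2^k * (r z)^k := mul_pow 2 (r z) k
        rw [le_div_iff₀ (pow_pos hrx k)]
        calc ‖iteratedFDerivWithin ℝ k u (ball (0:En n) 5) z‖ * (r x)^k
            ≤ ‖iteratedFDerivWithin ℝ k u (ball (0:En n) 5) z‖ * (2^k * (r z)^k) :=
              mul_le_mul_of_nonneg_left hpow (norm_nonneg _)
          _ = 2^k * ((r z)^k * ‖iteratedFDerivWithin ℝ k u (ball (0:En n) 5) z‖) := by ring
          _ ≤ 2^k * M := mul_le_mul_of_nonneg_left hz3 (by positivity)
      have h5 : (r x)^k * (2^k * M / (r x)^k) = 2^k * M := by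
        field_simp
      calc (r x)^k * supDeriv n u k x (3 * r x)
          ≤ (r x)^k * (2^k * M / (r x)^k) :=
            mul_le_mul_of_nonneg_left hsd (pow_nonneg hrx.le k)
        _ = 2^k * M := h5
        _ ≤ 2^m * M := mul_le_mul_of_nonneg_right
            (pow_le_pow_right₀ (by norm_num) hk') hM0
    have hsum : ∑ k ∈ Finset.range (m+1), (r x)^k * supDeriv n u k x (3 * r x)
        ≤ ((m:ℝ)+1) * 2^m * M := by
      calc ∑ k ∈ Finset.range (m+1), (r x)^k * supDeriv n u k x (3 * r x)
          ≤ ∑ _k ∈ Finset.range (m+1), 2^m * M := Finset.sum_le_sum hterm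
        _ = ((m:ℝ)+1) * 2^m * M := by
            rw [Finset.sum_const, Finset.card_range, nsmul_eq_mul]; push_cast; ring
    have h6 : ε₀ * ∑ k ∈ Finset.range (m+1), (r x)^k * supDeriv n u k x (3 * r x)
        ≤ (1/2) * M := by
      calc ε₀ * ∑ k ∈ Finset.range (m+1), (r x)^k * supDeriv n u k x (3 * r x)
          ≤ ε₀ * (((m:ℝ)+1) * 2^m * M) := mul_le_mul_of_nonneg_left hsum hε₀pos.le
        _ = (ε₀ * (((m:ℝ)+1) * 2^m)) * M := by ring
        _ ≤ (1/2) * M := mul_le_mul_of_nonneg_right h2m hM0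
    rw [hFeq]
    linarith
  have hMabs : M ≤ c * σ₀ + (1/2) * M := by
    refine csSup_le hne ?_
    rintro _ ⟨x, hx, rfl⟩
    exact habs x hx
  have hM2 : M ≤ 2 * (c * σ₀) := by linarith
  -- conclusion
  have hfinal : ∀ k ∈ Finset.range (m+1), supDeriv n u k 0 (1/2) ≤ 4^m * M := by
    intro k hk
    have hk' := Nat.lt_succ_iff.mp (Finset.mem_range.mp hk)
    have h1 : supDeriv n u k 0 (1/2) ≤ 4^k * M := by
      apply supDeriv_le (by positivity)
      intro z hz
      have hz4 := mem_ball_zero_iff.mp hz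
      have hz2 : ‖z‖ < 2 := by linarith
      have hz3 := hpt z hz2 k hk'
      have hrz : (1/4 : ℝ) ≤ r z := by rw [hreq]; linarith
      have hp : (1/4:ℝ)^k ≤ (r z)^k := pow_le_pow_left₀ (by norm_num) hrz k
      have h5 : (1/4:ℝ)^k * ‖iteratedFDerivWithin ℝ k u (ball (0:En n) 5) z‖ ≤ M :=
        le_trans (mul_le_mul_of_nonneg_right hp (norm_nonneg _)) hz3
      have h6 : (4:ℝ)^k * ((1/4:ℝ)^k * ‖iteratedFDerivWithin ℝ k u (ball (0:En n) 5) z‖)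
          = ‖iteratedFDerivWithin ℝ k u (ball (0:En n) 5) z‖ := by
        rw [← mul_assoc, ← mul_pow]; norm_num
      calc ‖iteratedFDerivWithin ℝ k u (ball (0:En n) 5) z‖
          = 4^k * ((1/4:ℝ)^k * ‖iteratedFDerivWithin ℝ k u (ball (0:En n) 5) z‖) := h6.symm
        _ ≤ 4^k * M := mul_le_mul_of_nonneg_left h5 (by positivity)
    exact h1.trans (mul_le_mul_of_nonneg_right (pow_le_pow_right₀ (by norm_num) hk') hM0)
  calc ∑ k ∈ Finset.range (m+1), supDeriv n u k 0 (1/2)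
      ≤ ∑ _k ∈ Finset.range (m+1), 4^m * M := Finset.sum_le_sum hfinal
    _ = ((m:ℝ)+1) * 4^m * M := by
        rw [Finset.sum_const, Finset.card_range, nsmul_eq_mul]; push_cast; ring
    _ ≤ ((m:ℝ)+1) * 4^m * (2 * (c * σ₀)) := mul_le_mul_of_nonneg_left hM2 (by positivity)
    _ = 2 * ((m:ℝ)+1) * 4^m * c * σ₀ := by ring
end
end
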